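/- For any simple hypergraph H and any nonnegative integers h > k, the L(h,k)-chromatic number of H equals the L(h,k)-chromatic number of its 2-section: λ_{h,k}(H) = λ_{h,k}([H]_2). -/

import Mathlib

open scoped Classical

/-- The "colour distance" between two vertices under a colouring `f`. -/
def hDist {V : Type*} (f : V → ℕ) (u v : V) : ℕ := ((f u : ℤ) - (f v : ℤ)).natAbs

/-- An `L(h,k)`-colouring of the hypergraph with edge family `E`. -/
def IsLColoring {V : Type*} (E : Finset (Finset V)) (h k : ℕ) (f : V → ℕ) : Prop :=
  (∀ u v : V, u ≠ v → (∃ e ∈ E, u ∈ e ∧ v ∈ e) → h ≤ hDist f u v) ∧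
  (∀ u v : V, u ≠ v →
    (∃ e₁ ∈ E, ∃ e₂ ∈ E, u ∈ e₁ ∧ v ∈ e₂ ∧ ((e₁ ∩ e₂) \ {u, v}).Nonempty) →
    k ≤ hDist f u v)

/-- The span of a colouring: maximum colour minus minimum colour. -/
noncomputable def hSpan {V : Type*} [Fintype V] (f : V → ℕ) : ℕ :=
  Finset.univ.sup f - sInf (Set.range f)

/-- The `L(h,k)`-chromatic number of a hypergraph. -/
noncomputable def lamL {V : Type*} [Fintype V] (E : Finset (Finset V)) (h k : ℕ) : ℕ :=
  sInf {s | ∃ f : V → ℕ, IsLColoring E h k f ∧ hSpan f = s}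

/-- A simple hypergraph: edges have cardinality at least 2, and no edge contains another. -/
def HSimple {V : Type*} (E : Finset (Finset V)) : Prop :=
  (∀ e ∈ E, 2 ≤ e.card) ∧ ∀ e₁ ∈ E, ∀ e₂ ∈ E, e₁ ⊆ e₂ → e₁ = e₂

/-- Degree of a vertex in a hypergraph. -/
noncomputable def hDeg {V : Type*} (E : Finset (Finset V)) (v : V) : ℕ :=
  (E.filter (fun e => v ∈ e)).card

/-- The 2-section of a hypergraph. -/
def twoSection {V : Type*} (E : Finset (Finset V)) : SimpleGraph V where
  Adj u v := u ≠ v ∧ ∃ e ∈ E, u ∈ e ∧ v ∈ e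
  symm := by
    refine ⟨?_⟩
    rintro u v ⟨huv, e, he, hu, hv⟩
    exact ⟨huv.symm, e, he, hv, hu⟩
  loopless := by
    refine ⟨?_⟩
    rintro u ⟨h, -⟩
    exact h rfl
/-- An `L(h,k)`-colouring of a simple graph. -/
def IsGLColoring {V : Type*} (G : SimpleGraph V) (h k : ℕ) (f : V → ℕ) : Prop :=
  (∀ u v : V, G.Adj u v → h ≤ hDist f u v) ∧
  (∀ u v : V, G.dist u v = 2 → k ≤ hDist f u v)

/-- The `L(h,k)`-chromatic number of a simple graph. -/
noncomputable def lamG {V : Type*} [Fintype V] (G : SimpleGraph V) (h k : ℕ) : ℕ :=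
  sInf {s | ∃ f : V → ℕ, IsGLColoring G h k f ∧ hSpan f = s}

/-- The edge boundary of a vertex set `F`: edges with exactly one endpoint in `F`. -/
def graphBoundary {V : Type*} (G : SimpleGraph V) (F : Finset V) : Set (Sym2 V) :=
  {e | e ∈ G.edgeSet ∧ ∃ a b, e = s(a, b) ∧ a ∈ F ∧ b ∉ F}

/-- The expansion (isoperimetric) constant of a graph. -/
noncomputable def expansion {V : Type*} [Fintype V] (G : SimpleGraph V) : ℝ :=
  sInf {r : ℝ | ∃ F : Finset V, 0 < F.card ∧ 2 * F.card ≤ Fintype.card V ∧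
      r = (graphBoundary G F).ncard / F.card}

/-! In the 2-section, two vertices at distance two are exactly two distinct, non-adjacent vertices
lying in two edges of `H` that share a third vertex. So the distance-two condition of a graph
colouring of `[H]₂` is the hypergraph condition restricted to non-adjacent pairs, while on adjacent
pairs the separation `k` is implied by the separation `h ≥ k`. So the two notions of
`L(h,k)`-colouring coincide, and hence so do the minimal spans. -/

theorem SimpleGraph.dist_eq_two_iff {V : Type*} {G : SimpleGraph V} {u v : V} :
    G.dist u v = 2 ↔ u ≠ v ∧ ¬G.Adj u v ∧ (G.commonNeighbors u v).Nonempty := by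
  rw [SimpleGraph.dist, ENat.toNat_eq_iff two_ne_zero]
  exact_mod_cast SimpleGraph.edist_eq_two_iff

section TwoSection

variable {V : Type*} {E : Finset (Finset V)} {u v : V}

@[simp]
theorem twoSection_adj : (twoSection E).Adj u v ↔ u ≠ v ∧ ∃ e ∈ E, u ∈ e ∧ v ∈ e :=
  Iff.rfl

theorem twoSection_commonNeighbors_nonempty_iff :
    ((twoSection E).commonNeighbors u v).Nonempty ↔
      ∃ e₁ ∈ E, ∃ e₂ ∈ E, u ∈ e₁ ∧ v ∈ e₂ ∧ ((e₁ ∩ e₂) \ {u, v}).Nonempty := by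
  simp only [Set.Nonempty, SimpleGraph.mem_commonNeighbors, twoSection_adj, Finset.Nonempty,
    Finset.mem_sdiff, Finset.mem_inter, Finset.mem_insert, Finset.mem_singleton, not_or]
  constructor
  · rintro ⟨w, ⟨huw, e₁, he₁, hu, hw₁⟩, hvw, e₂, he₂, hv, hw₂⟩
    exact ⟨e₁, he₁, e₂, he₂, hu, hv, w, ⟨hw₁, hw₂⟩, huw.symm, hvw.symm⟩
  · rintro ⟨e₁, he₁, e₂, he₂, hu, hv, w, ⟨hw₁, hw₂⟩, hwu, hwv⟩
    exact ⟨w, ⟨Ne.symm hwu, e₁, he₁, hu, hw₁⟩, Ne.symm hwv, e₂, he₂, hv, hw₂⟩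

theorem twoSection_dist_eq_two_iff :
    (twoSection E).dist u v = 2 ↔ u ≠ v ∧ ¬(twoSection E).Adj u v ∧
      ∃ e₁ ∈ E, ∃ e₂ ∈ E, u ∈ e₁ ∧ v ∈ e₂ ∧ ((e₁ ∩ e₂) \ {u, v}).Nonempty := by
  rw [SimpleGraph.dist_eq_two_iff, twoSection_commonNeighbors_nonempty_iff]

theorem isLColoring_iff_isGLColoring_twoSection {h k : ℕ} (hkh : k ≤ h) {f : V → ℕ} :
    IsLColoring E h k f ↔ IsGLColoring (twoSection E) h k f := by
  constructor
  · rintro ⟨hedge, hcommon⟩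
    refine ⟨fun u v ⟨huv, he⟩ => hedge u v huv he, fun u v hdist => ?_⟩
    obtain ⟨huv, -, hpath⟩ := twoSection_dist_eq_two_iff.mp hdist
    exact hcommon u v huv hpath
  · rintro ⟨hadj, hdist⟩
    refine ⟨fun u v huv he => hadj u v ⟨huv, he⟩, fun u v huv hpath => ?_⟩
    by_cases huv_adj : (twoSection E).Adj u v
    · exact hkh.trans (hadj u v huv_adj)
    · exact hdist u v (twoSection_dist_eq_two_iff.mpr ⟨huv, huv_adj, hpath⟩)

end TwoSection

theorem lamL_eq_lamG_twoSection_general {V : Type*} [Fintype V] (E : Finset (Finset V))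
    (h k : ℕ) (hhk : k < h) :
    lamL E h k = lamG (twoSection E) h k := by
  simp only [lamL, lamG, isLColoring_iff_isGLColoring_twoSection hhk.le]

/-- For any simple hypergraph `H` and nonnegative integers `h > k`,
`λ_{h,k}(H) = λ_{h,k}([H]₂)`, where `[H]₂` is the 2-section of `H`. -/
theorem lamL_eq_lamG_twoSection {V : Type*} [Fintype V] (E : Finset (Finset V))
    (h k : ℕ) (hhk : k < h) (hsimple : HSimple E) :
    lamL E h k = lamG (twoSection E) h k :=
  lamL_eq_lamG_twoSection_general E h k hhk
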